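/- For a Hermitian dilation H_A = [[0, A†],[A, 0]] with SVD A = UΣV†, conjugating the exponential by iX⊗I on the ancilla yields exp(−i H_A)·(iX⊗I) = diag(V,U) · [[sin Σ, i cos Σ],[i cos Σ, sin Σ]] · diag(U†, V†). -/

import Mathlib

/-!
Writing `W = diag(V, U)`, the dilation is `H_A = W · [[0, Σ], [Σ, 0]] · W†`, so `exp(−i H_A)` is `W`
times the exponential of `−i[[0, Σ], [Σ, 0]]`, times `W†`. The Hadamard block `[[1, 1], [1, −1]]`
diagonalises `[[0, D], [D, 0]]` into `diag(D, −D)`, whence for diagonal `D` the exponential is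
`[[cosh D, sinh D], [sinh D, cosh D]]`, which at `D = −iΣ` is `[[cos Σ, −i sin Σ], [−i sin Σ, cos Σ]]`.
Finally `W† X = X diag(U†, V†)`, and multiplying by `iX` turns the cos/sin matrix into the claimed one.
-/

namespace Matrix

variable {m : Type*} [Fintype m] [DecidableEq m]

theorem fromBlocks_mem_unitaryGroup {R : Type*} [CommRing R] [StarRing R]
    {U V : Matrix m m R} (hU : U ∈ unitaryGroup m R) (hV : V ∈ unitaryGroup m R) :
    fromBlocks U 0 0 V ∈ unitaryGroup (m ⊕ m) R := by
  rw [mem_unitaryGroup_iff, star_eq_conjTranspose] at hU hV ⊢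
  simp [fromBlocks_conjTranspose, fromBlocks_multiply, hU, hV]

theorem exp_unitary_conj {𝔸 : Type*} [NormedRing 𝔸] [NormedAlgebra ℚ 𝔸] [CompleteSpace 𝔸]
    [StarRing 𝔸] {W : Matrix m m 𝔸} (hW : W ∈ unitary (Matrix m m 𝔸)) (M : Matrix m m 𝔸) :
    NormedSpace.exp (W * M * Wᴴ) = W * NormedSpace.exp M * Wᴴ :=
  exp_units_conj (Unitary.toUnits ⟨W, hW⟩) M

theorem fromBlocks_zero_conjTranspose_conj {R : Type*} [Ring R] [StarRing R]
    (U V D : Matrix m m R) :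
    fromBlocks 0 (U * D * Vᴴ)ᴴ (U * D * Vᴴ) 0 =
      fromBlocks V 0 0 U * fromBlocks 0 Dᴴ D 0 * (fromBlocks V 0 0 U)ᴴ := by
  simp [fromBlocks_conjTranspose, fromBlocks_multiply, conjTranspose_mul, Matrix.mul_assoc]

theorem fromBlocks_mul_swap {R : Type*} [Semiring R] (P Q : Matrix m m R) :
    fromBlocks P 0 0 Q * fromBlocks 0 1 1 0 = fromBlocks 0 1 1 0 * fromBlocks Q 0 0 P := by
  simp [fromBlocks_multiply]

theorem fromBlocks_hadamard_conj {R : Type*} [Ring R] (X Y : Matrix m m R) :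
    fromBlocks 1 1 1 (-1) * fromBlocks X 0 0 Y * fromBlocks 1 1 1 (-1) =
      fromBlocks (X + Y) (X - Y) (X - Y) (X + Y) := by
  simp [fromBlocks_multiply, sub_eq_add_neg]

theorem fromBlocks_hadamard_mul_self {R : Type*} [Ring R] :
    fromBlocks (1 : Matrix m m R) 1 1 (-1) * fromBlocks 1 1 1 (-1) =
      (2 : R) • (1 : Matrix (m ⊕ m) (m ⊕ m) R) := by
  rw [fromBlocks_multiply, ← fromBlocks_one, fromBlocks_smul]
  simp [two_smul]

theorem exp_fromBlocks_zero_diagonal (b : m → ℂ) :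
    NormedSpace.exp (fromBlocks 0 (diagonal b) (diagonal b) 0) =
      fromBlocks (diagonal (Complex.cosh ∘ b)) (diagonal (Complex.sinh ∘ b))
        (diagonal (Complex.sinh ∘ b)) (diagonal (Complex.cosh ∘ b)) := by
  set H : Matrix (m ⊕ m) (m ⊕ m) ℂ := fromBlocks 1 1 1 (-1)
  have hH : H * ((2 : ℂ)⁻¹ • H) = 1 := by
    rw [mul_smul_comm, fromBlocks_hadamard_mul_self, smul_smul, inv_mul_cancel₀ two_ne_zero,
      one_smul]
  have hHinv : H⁻¹ = (2 : ℂ)⁻¹ • H := inv_eq_right_inv hH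
  have hdiagonalize : fromBlocks 0 (diagonal b) (diagonal b) 0 =
      H * diagonal (Sum.elim b (-b)) * H⁻¹ := by
    rw [hHinv, mul_smul_comm, ← fromBlocks_diagonal, fromBlocks_hadamard_conj]
    simp [fromBlocks_smul, ← diagonal_smul, ← two_mul, Pi.smul_def]
  have hexp : NormedSpace.exp (Sum.elim b (-b)) =
      Sum.elim (fun i => Complex.exp (b i)) (fun i => Complex.exp (-b i)) := by
    ext (i | i) <;> simp [Complex.exp_eq_exp_ℂ]
  rw [hdiagonalize, exp_conj _ _ (IsUnit.of_mul_eq_one _ hH), exp_diagonal, hexp, hHinv,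
    mul_smul_comm, ← fromBlocks_diagonal, fromBlocks_hadamard_conj, fromBlocks_smul,
    diagonal_add, diagonal_sub, ← diagonal_smul, ← diagonal_smul]
  congr <;> ext i <;> simp [Complex.cosh, Complex.sinh, div_eq_inv_mul]

theorem exp_neg_I_smul_fromBlocks_diagonal_mul_I_smul_swap (σ : m → ℝ) :
    NormedSpace.exp ((-Complex.I) • fromBlocks 0 (diagonal fun i => (σ i : ℂ))
        (diagonal fun i => (σ i : ℂ)) 0) * (Complex.I • fromBlocks 0 1 1 0) =
      fromBlocks (diagonal fun i => (Real.sin (σ i) : ℂ))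
        (diagonal fun i => Complex.I * (Real.cos (σ i) : ℂ))
        (diagonal fun i => Complex.I * (Real.cos (σ i) : ℂ))
        (diagonal fun i => (Real.sin (σ i) : ℂ)) := by
  have hsmul : (-Complex.I) • fromBlocks 0 (diagonal fun i => (σ i : ℂ))
      (diagonal fun i => (σ i : ℂ)) 0 =
      fromBlocks 0 (diagonal fun i => -((σ i : ℂ) * Complex.I))
        (diagonal fun i => -((σ i : ℂ) * Complex.I)) 0 := by
    simp [fromBlocks_smul, fromBlocks_neg, ← diagonal_smul, Pi.smul_def, mul_comm]
  have hI : ∀ z : ℂ, -(Complex.I * (z * Complex.I)) = z := fun z => by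
    linear_combination -z * Complex.I_mul_I
  rw [hsmul, exp_fromBlocks_zero_diagonal]
  simp [Function.comp_def, Complex.cosh_neg, Complex.sinh_neg, Complex.cosh_mul_I,
    Complex.sinh_mul_I, fromBlocks_multiply, fromBlocks_smul, ← diagonal_smul, Pi.smul_def, hI]

end Matrix

open Matrix

theorem hamiltonian_block_encoding_shifted_factorization_general {n : ℕ}
    (A U V : Matrix (Fin n) (Fin n) ℂ) (σ : Fin n → ℝ)
    (hU : U ∈ Matrix.unitaryGroup (Fin n) ℂ) (hV : V ∈ Matrix.unitaryGroup (Fin n) ℂ)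
    (hA : A = U * Matrix.diagonal (fun i => (σ i : ℂ)) * Vᴴ) :
    NormedSpace.exp ((-Complex.I) • Matrix.fromBlocks 0 Aᴴ A 0) *
        (Complex.I • Matrix.fromBlocks 0 1 1 0) =
      Matrix.fromBlocks V 0 0 U *
        Matrix.fromBlocks
          (Matrix.diagonal fun i => (Real.sin (σ i) : ℂ))
          (Matrix.diagonal fun i => Complex.I * (Real.cos (σ i) : ℂ))
          (Matrix.diagonal fun i => Complex.I * (Real.cos (σ i) : ℂ))
          (Matrix.diagonal fun i => (Real.sin (σ i) : ℂ)) *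
        Matrix.fromBlocks Uᴴ 0 0 Vᴴ := by
  set W := fromBlocks V 0 0 U
  set S : Matrix (Fin n) (Fin n) ℂ := diagonal fun i => (σ i : ℂ)
  have hW : W ∈ unitary (Matrix (Fin n ⊕ Fin n) (Fin n ⊕ Fin n) ℂ) :=
    fromBlocks_mem_unitaryGroup hV hU
  have hdilation : fromBlocks 0 Aᴴ A 0 = W * fromBlocks 0 S S 0 * Wᴴ := by
    have hS : Sᴴ = S := by simp [S, diagonal_conjTranspose, Pi.star_def]
    rw [hA, fromBlocks_zero_conjTranspose_conj, hS]
  have hswap : Wᴴ * (Complex.I • fromBlocks 0 1 1 0) =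
      (Complex.I • fromBlocks 0 1 1 0) * fromBlocks Uᴴ 0 0 Vᴴ := by
    simp [W, fromBlocks_conjTranspose, fromBlocks_mul_swap]
  calc _ = W * NormedSpace.exp ((-Complex.I) • fromBlocks 0 S S 0) *
        (Wᴴ * (Complex.I • fromBlocks 0 1 1 0)) := by
        rw [hdilation, ← Matrix.smul_mul, ← Matrix.mul_smul, exp_unitary_conj hW,
          Matrix.mul_assoc]
    _ = W * (NormedSpace.exp ((-Complex.I) • fromBlocks 0 S S 0) *
        (Complex.I • fromBlocks 0 1 1 0)) * fromBlocks Uᴴ 0 0 Vᴴ := by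
        rw [hswap]
        simp only [Matrix.mul_assoc]
    _ = _ := by rw [exp_neg_I_smul_fromBlocks_diagonal_mul_I_smul_swap]

/-- For the Hermitian dilation `H_A = [[0,A†],[A,0]]` with SVD `A = UΣV†`,
`exp(−iH_A)·(iX⊗I) = diag(V,U) · [[sin Σ, i cos Σ],[i cos Σ, sin Σ]] · diag(U†,V†)`. -/
theorem hamiltonian_block_encoding_shifted_factorization {n : ℕ}
    (A U V : Matrix (Fin n) (Fin n) ℂ) (σ : Fin n → ℝ)
    (hU : U ∈ Matrix.unitaryGroup (Fin n) ℂ) (hV : V ∈ Matrix.unitaryGroup (Fin n) ℂ)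
    (hσ : ∀ i, 0 ≤ σ i)
    (hA : A = U * Matrix.diagonal (fun i => (σ i : ℂ)) * Vᴴ) :
    NormedSpace.exp ((-Complex.I) • Matrix.fromBlocks 0 Aᴴ A 0) *
        (Complex.I • Matrix.fromBlocks 0 1 1 0) =
      Matrix.fromBlocks V 0 0 U *
        Matrix.fromBlocks
          (Matrix.diagonal fun i => (Real.sin (σ i) : ℂ))
          (Matrix.diagonal fun i => Complex.I * (Real.cos (σ i) : ℂ))
          (Matrix.diagonal fun i => Complex.I * (Real.cos (σ i) : ℂ))
          (Matrix.diagonal fun i => (Real.sin (σ i) : ℂ)) *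
        Matrix.fromBlocks Uᴴ 0 0 Vᴴ :=
  hamiltonian_block_encoding_shifted_factorization_general A U V σ hU hV hA
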